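/- arXiv:2603.05527 — 3 statements merged into one kernel-verified Lean document; each statement's English description precedes it below -/
import Mathlib

section
/- (Drifting Force Identity) If p(y) = (1/Z) exp(-E(y)/(k_B T)) is a Boltzmann density with differentiable energy E, force F(y) = -∇E(y), and p(y)k(x,y) → 0 at infinity, then the kernel-weighted attraction satisfies ∫ p(y)k(x,y)(y-x)dy / ∫ p(y)k(x,y)dy = (τ²/(k_B T)) · ∫ p(y)k(x,y)F(y)dy / ∫ p(y)k(x,y)dy, where k is the Gaussian kernel with bandwidth τ. -/
open MeasureTheory Filter

open RealInnerProductSpace in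
/-- Drifting Force Identity: for a Boltzmann density `p ∝ exp(-E/(k_B T))`,
the kernel-weighted attraction equals `τ²/(k_B T)` times the kernel-weighted
average of the force `F = -∇E`. -/
theorem stmt2 (d : ℕ) (τ kBT Z : ℝ) (hτ : 0 < τ) (hkBT : 0 < kBT) (hZ : 0 < Z)
    (x : EuclideanSpace ℝ (Fin d))
    (k : EuclideanSpace ℝ (Fin d) → EuclideanSpace ℝ (Fin d) → ℝ)
    (hk : ∀ x y, k x y = Real.exp (-‖x - y‖ ^ 2 / (2 * τ ^ 2)))
    (E : EuclideanSpace ℝ (Fin d) → ℝ)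
    (hE : ContDiff ℝ 1 E)
    (F : EuclideanSpace ℝ (Fin d) → EuclideanSpace ℝ (Fin d))
    (hF : ∀ y, F y = -gradient E y)
    (p : EuclideanSpace ℝ (Fin d) → ℝ)
    (hp : ∀ y, p y = Real.exp (-E y / kBT) / Z)
    (hZdef : Z = ∫ y, Real.exp (-E y / kBT))
    (hdecay : Tendsto (fun y => p y * k x y) (cocompact _) (nhds 0))
    (hint1 : Integrable (fun y => (p y * k x y) • (y - x)))
    (hint2 : Integrable (fun y => (p y * k x y) • F y))
    (hint3 : Integrable (fun y => p y * k x y)) :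
    (∫ y, p y * k x y)⁻¹ • (∫ y, (p y * k x y) • (y - x)) =
      (τ ^ 2 / kBT) • ((∫ y, p y * k x y)⁻¹ • ∫ y, (p y * k x y) • F y) := by
  classical
  set g : EuclideanSpace ℝ (Fin d) → ℝ := fun y => p y * k x y with hg
  set D : EuclideanSpace ℝ (Fin d) → EuclideanSpace ℝ (Fin d) :=
    fun y => kBT⁻¹ • (g y • F y) - (τ ^ 2)⁻¹ • (g y • (y - x)) with hD
  have hint1' : Integrable (fun y => g y • (y - x)) := hint1
  have hint2' : Integrable (fun y => g y • F y) := hint2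
  have hDint : Integrable D := by
    exact ((hint2'.smul kBT⁻¹).sub (hint1'.smul ((τ ^ 2)⁻¹)))
  have hgdef : g = fun y => Real.exp (kBT⁻¹ * -E y) * Z⁻¹ *
      Real.exp ((2 * τ ^ 2)⁻¹ * -‖x - y‖ ^ 2) := by
    funext y
    show p y * k x y = _
    rw [hp, hk, div_eq_inv_mul (-E y) kBT, div_eq_inv_mul _ (2 * τ ^ 2), div_eq_mul_inv _ Z]
  have hEdiff : Differentiable ℝ E := hE.differentiable one_ne_zero
  have key : ∀ (y w : EuclideanSpace ℝ (Fin d)),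
      HasLineDerivAt ℝ g (⟪w, D y⟫) y w := by
    intro y w
    have hEy : HasFDerivAt E ((InnerProductSpace.toDual ℝ _) (gradient E y)) y :=
      hasGradientAt_iff_hasFDerivAt.mp (hEdiff y).hasGradientAt
    have h1 := ((hEy.neg.const_mul kBT⁻¹).exp).mul_const Z⁻¹
    have h2 := ((((hasFDerivAt_const x y).sub (hasFDerivAt_id y)).norm_sq).neg.const_mul
      ((2 * τ ^ 2)⁻¹)).exp
    have h3 := (h1.mul h2).hasLineDerivAt w
    rw [hgdef]
    convert h3 using 1
    case e'_7 => rfl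
    case e'_8 => rfl
    case e'_9 => rfl
    rw [real_inner_comm]
    simp only [hD, hF, hg, hp, hk, div_eq_inv_mul, inner_sub_left, real_inner_smul_left,
      inner_neg_left, InnerProductSpace.toDual_apply_apply, ContinuousLinearMap.add_apply,
      ContinuousLinearMap.smul_apply, ContinuousLinearMap.neg_apply,
      ContinuousLinearMap.comp_apply, ContinuousLinearMap.sub_apply,
      ContinuousLinearMap.zero_apply, ContinuousLinearMap.coe_id', id_eq,
      innerSL_apply_apply, smul_eq_mul, zero_sub, inner_neg_right, nsmul_eq_mul,
      Nat.cast_ofNat, Pi.neg_apply, Pi.sub_apply]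
    ring
  have hzero : ∀ w : EuclideanSpace ℝ (Fin d), ∫ y, (⟪w, D y⟫ : ℝ) = 0 := by
    intro w
    have hf : ∀ y : EuclideanSpace ℝ (Fin d),
        HasLineDerivAt ℝ (fun _ : EuclideanSpace ℝ (Fin d) => (1 : ℝ)) 0 y w := by
      intro y
      simpa using (hasFDerivAt_const (1 : ℝ) y).hasLineDerivAt w
    have hgi : Integrable (fun y => ⟪w, D y⟫) := (innerSL ℝ w).integrable_comp hDint
    have := integral_bilinear_hasLineDerivAt_right_eq_neg_left_of_integrable
      (μ := (volume : Measure (EuclideanSpace ℝ (Fin d))))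
      (B := ContinuousLinearMap.mul ℝ ℝ) (f := fun _ => (1 : ℝ)) (f' := fun _ => (0 : ℝ))
      (g := g) (g' := fun y => ⟪w, D y⟫) (v := w)
      (by simpa using (integrable_zero _ _ (volume : Measure (EuclideanSpace ℝ (Fin d)))))
      (by simpa using hgi) (by simpa using hint3) (fun y _ => hf y) (fun y _ => key y w)
    simpa using this
  have hDzero : (∫ y, D y) = 0 := by
    refine ext_inner_left ℝ fun w => ?_
    rw [← integral_inner hDint w, hzero w, inner_zero_right]
  have hA : Integrable (fun y => kBT⁻¹ • (g y • F y)) := by exact hint2'.smul kBT⁻¹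
  have hB : Integrable (fun y => (τ ^ 2)⁻¹ • (g y • (y - x))) := by
    exact hint1'.smul ((τ ^ 2)⁻¹)
  have hsplit : (∫ y, D y) =
      kBT⁻¹ • (∫ y, g y • F y) - (τ ^ 2)⁻¹ • (∫ y, g y • (y - x)) := by
    rw [show (∫ y, D y) = ∫ y, (kBT⁻¹ • (g y • F y) - (τ ^ 2)⁻¹ • (g y • (y - x))) from rfl,
      integral_sub hA hB, integral_smul, integral_smul]
  have heq : (τ ^ 2)⁻¹ • (∫ y, g y • (y - x)) = kBT⁻¹ • ∫ y, g y • F y := by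
    have h0 := hsplit.symm.trans hDzero
    exact (sub_eq_zero.mp h0).symm
  have hmain : (∫ y, g y • (y - x)) = (τ ^ 2 / kBT) • ∫ y, g y • F y := by
    have hτ2 : (τ ^ 2 : ℝ) ≠ 0 := by positivity
    calc (∫ y, g y • (y - x)) = (τ ^ 2) • ((τ ^ 2)⁻¹ • ∫ y, g y • (y - x)) := by
          rw [smul_smul, mul_inv_cancel₀ hτ2, one_smul]
      _ = (τ ^ 2) • (kBT⁻¹ • ∫ y, g y • F y) := by rw [heq]
      _ = (τ ^ 2 / kBT) • ∫ y, g y • F y := by rw [smul_smul, div_eq_mul_inv]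
  rw [hmain, smul_comm]
end

section
/- (ω controls the Boltzmann correction) In the population limit, the force-interpolated attraction V_ω⁺(x) = E_p[k̄(x,Y)((1-ω)(Y-x) + ω τ² F(Y)/(k_B T))] decomposes as V_ω⁺(x) = V_p⁺(x) + ω τ² E_p[k̄(x,Y) ∇ log(p_B(Y)/p(Y))], where p_B is the Boltzmann density with ∇ log p_B = F/(k_B T), V_p⁺ is the standard attraction, and k̄(x,y) = k(x,y)/E_p[k(x,Y')] is the normalized Gaussian kernel weight. In particular, the correction term scales linearly in ω. -/
open MeasureTheory Filter

section Aux

variable {d : ℕ}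

lemma grad_apply (f : EuclideanSpace ℝ (Fin d) → ℝ) (y : EuclideanSpace ℝ (Fin d)) (i : Fin d) :
    gradient f y i = fderiv ℝ f y (EuclideanSpace.single i 1) := by
  rw [gradient]
  rw [show ((InnerProductSpace.toDual ℝ (EuclideanSpace ℝ (Fin d))).symm (fderiv ℝ f y)) i
      = inner ℝ ((InnerProductSpace.toDual ℝ
          (EuclideanSpace ℝ (Fin d))).symm (fderiv ℝ f y)) (EuclideanSpace.single i (1:ℝ)) from ?_]
  · rw [← InnerProductSpace.toDual_apply_apply]
    simp
  · rw [EuclideanSpace.inner_single_right]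
    simp

lemma grad_sub' {f g : EuclideanSpace ℝ (Fin d) → ℝ} {y : EuclideanSpace ℝ (Fin d)}
    (hf : DifferentiableAt ℝ f y) (hg : DifferentiableAt ℝ g y) :
    gradient (fun z => f z - g z) y = gradient f y - gradient g y := by
  ext i
  rw [PiLp.sub_apply, grad_apply, grad_apply, grad_apply, fderiv_fun_sub hf hg,
    ContinuousLinearMap.sub_apply]

lemma gaussian_hasFDerivAt (τ : ℝ) (hτ : 0 < τ) (x y : EuclideanSpace ℝ (Fin d)) :
    HasFDerivAt (fun z : EuclideanSpace ℝ (Fin d) => Real.exp (-‖x - z‖ ^ 2 / (2 * τ ^ 2)))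
      (Real.exp (-‖x - y‖ ^ 2 / (2 * τ ^ 2)) •
        ((-(2 * τ ^ 2)⁻¹) •
          ((fderivInnerCLM ℝ ((x - y : EuclideanSpace ℝ (Fin d)),
              (x - y : EuclideanSpace ℝ (Fin d)))).comp
            (((0 : EuclideanSpace ℝ (Fin d) →L[ℝ] EuclideanSpace ℝ (Fin d)) -
                ContinuousLinearMap.id ℝ _).prod
             ((0 : EuclideanSpace ℝ (Fin d) →L[ℝ] EuclideanSpace ℝ (Fin d)) -
                ContinuousLinearMap.id ℝ _))))) y := by
  have hs : HasFDerivAt (fun z : EuclideanSpace ℝ (Fin d) => x - z)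
      ((0 : EuclideanSpace ℝ (Fin d) →L[ℝ] EuclideanSpace ℝ (Fin d)) -
        ContinuousLinearMap.id ℝ _) y :=
    (hasFDerivAt_const x y).sub (hasFDerivAt_id y)
  have hin := hs.inner ℝ hs
  have hmul := hin.const_mul (-(2 * τ ^ 2)⁻¹)
  have hexp := (Real.hasDerivAt_exp _).comp_hasFDerivAt y hmul
  have hfun : (fun z : EuclideanSpace ℝ (Fin d) => Real.exp (-‖x - z‖ ^ 2 / (2 * τ ^ 2)))
      = fun z => Real.exp (-(2 * τ ^ 2)⁻¹ * (inner ℝ (x - z) (x - z) : ℝ)) := by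
    funext z
    rw [real_inner_self_eq_norm_sq]
    ring_nf
  rw [hfun, show -‖x - y‖ ^ 2 / (2 * τ ^ 2) = -(2 * τ ^ 2)⁻¹ * (inner ℝ (x - y) (x - y) : ℝ) by
    rw [real_inner_self_eq_norm_sq]; ring_nf]
  exact hexp

lemma gaussian_fderiv_apply (τ : ℝ) (hτ : 0 < τ) (x y v : EuclideanSpace ℝ (Fin d)) :
    fderiv ℝ (fun z : EuclideanSpace ℝ (Fin d) => Real.exp (-‖x - z‖ ^ 2 / (2 * τ ^ 2))) y v
      = Real.exp (-‖x - y‖ ^ 2 / (2 * τ ^ 2)) * ((τ ^ 2)⁻¹ * (inner ℝ (x - y) v : ℝ)) := by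
  rw [(gaussian_hasFDerivAt τ hτ x y).fderiv]
  simp only [ContinuousLinearMap.smul_apply, ContinuousLinearMap.coe_comp', Function.comp_apply,
    ContinuousLinearMap.prod_apply, ContinuousLinearMap.sub_apply, ContinuousLinearMap.zero_apply,
    ContinuousLinearMap.id_apply, fderivInnerCLM_apply, smul_eq_mul]
  rw [zero_sub, inner_neg_right, inner_neg_left, real_inner_comm]
  have hτ2 : τ ^ 2 ≠ 0 := by positivity
  field_simp
  ring

end Aux

/-- `ω` controls the Boltzmann correction: the force-interpolated attraction
decomposes as the standard attraction plus `ω τ²` times the kernel-weighted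
average of `∇ log (p_B / p)`. -/
theorem stmt6 (d : ℕ) (τ kBT ω : ℝ) (hτ : 0 < τ) (hkBT : 0 < kBT)
    (hω : ω ∈ Set.Icc (0 : ℝ) 1)
    (x : EuclideanSpace ℝ (Fin d))
    (k : EuclideanSpace ℝ (Fin d) → EuclideanSpace ℝ (Fin d) → ℝ)
    (hk : ∀ x y, k x y = Real.exp (-‖x - y‖ ^ 2 / (2 * τ ^ 2)))
    (p pB : EuclideanSpace ℝ (Fin d) → ℝ)
    (hp_pos : ∀ y, 0 < p y) (hpB_pos : ∀ y, 0 < pB y)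
    (hp_smooth : ContDiff ℝ (⊤ : ℕ∞) p) (hpB_diff : Differentiable ℝ pB)
    (E : EuclideanSpace ℝ (Fin d) → ℝ) (hE : Differentiable ℝ E)
    (F : EuclideanSpace ℝ (Fin d) → EuclideanSpace ℝ (Fin d))
    (hF : ∀ y, F y = -gradient E y)
    -- Boltzmann score identity: ∇ log p_B = F/(k_B T)
    (hscore : ∀ y, gradient (fun z => Real.log (pB z)) y = (kBT)⁻¹ • F y)
    -- decay condition of the Drifting Score Identity for p
    (hdecay : Tendsto (fun y => p y * k x y) (cocompact _) (nhds 0))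
    (Zk : ℝ) (hZk : Zk = ∫ y, p y * k x y)
    (hintk : Integrable (fun y => p y * k x y))
    (hint1 : Integrable (fun y => (p y * k x y / Zk) •
      ((1 - ω) • (y - x) + (ω * τ ^ 2 / kBT) • F y)))
    (hint2 : Integrable (fun y => (p y * k x y / Zk) • (y - x)))
    (hint3 : Integrable (fun y => (p y * k x y / Zk) •
      gradient (fun z => Real.log (pB z / p z)) y)) :
    (∫ y, (p y * k x y / Zk) • ((1 - ω) • (y - x) + (ω * τ ^ 2 / kBT) • F y)) =
      (∫ y, (p y * k x y / Zk) • (y - x)) +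
        (ω * τ ^ 2) •
          ∫ y, (p y * k x y / Zk) • gradient (fun z => Real.log (pB z / p z)) y := by
  obtain ⟨hω0, hω1⟩ := hω
  have hτ2 : (0:ℝ) < τ ^ 2 := by positivity
  have hp_diff : Differentiable ℝ p := hp_smooth.differentiable (by simp)
  have hkpos : ∀ y, 0 < k x y := fun y => by rw [hk]; exact Real.exp_pos _
  -- positivity of the normalizer
  have hZkpos : 0 < Zk := by
    rw [hZk]
    refine (integral_pos_iff_support_of_nonneg_ae ?_ hintk).mpr ?_
    · exact Eventually.of_forall fun y => (mul_pos (hp_pos y) (hkpos y)).le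
    · have hsupp : Function.support (fun y => p y * k x y) = Set.univ :=
        Set.eq_univ_of_forall fun y => (mul_pos (hp_pos y) (hkpos y)).ne'
      rw [hsupp]
      exact isOpen_univ.measure_pos volume ⟨x, trivial⟩
  have hZkne : Zk ≠ 0 := hZkpos.ne'
  rcases eq_or_ne ω 0 with rfl | hωne
  · simp
  have hωpos : 0 < ω := lt_of_le_of_ne hω0 (Ne.symm hωne)
  have hcne : ω * τ ^ 2 / kBT ≠ 0 := by positivity
  -- derived integrabilities
  have hintF' : Integrable (fun y => (p y * k x y / Zk) • ((ω * τ ^ 2 / kBT) • F y)) := by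
    have h := hint1.sub (hint2.smul (1 - ω))
    refine h.congr (Eventually.of_forall fun y => ?_)
    simp only [Pi.sub_apply, Pi.smul_apply]
    module
  have hintF : Integrable (fun y => (p y * k x y / Zk) • F y) := by
    have h := hintF'.smul (ω * τ ^ 2 / kBT)⁻¹
    refine h.congr (Eventually.of_forall fun y => ?_)
    simp only [Pi.smul_apply]
    match_scalars
    field_simp
  have hgradsplit : ∀ y, gradient (fun z => Real.log (pB z / p z)) y
      = (kBT)⁻¹ • F y - gradient (fun z => Real.log (p z)) y := by
    intro y
    have h1 : (fun z => Real.log (pB z / p z)) = fun z => Real.log (pB z) - Real.log (p z) :=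
      funext fun z => Real.log_div (hpB_pos z).ne' (hp_pos z).ne'
    rw [h1, grad_sub' ((hpB_diff y).log (hpB_pos y).ne') ((hp_diff y).log (hp_pos y).ne'),
      hscore]
  have hintlogp : Integrable
      (fun y => (p y * k x y / Zk) • gradient (fun z => Real.log (p z)) y) := by
    have h := (hintF.smul (kBT)⁻¹).sub hint3
    refine h.congr (Eventually.of_forall fun y => ?_)
    simp only [Pi.sub_apply, Pi.smul_apply]
    rw [hgradsplit y]
    module
  -- the drifting score identity
  have key : (∫ y, (p y * k x y / Zk) • (y - x)) =
      (τ ^ 2) • ∫ y, (p y * k x y / Zk) • gradient (fun z => Real.log (p z)) y := by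
    have pl : ∀ (f : EuclideanSpace ℝ (Fin d) → EuclideanSpace ℝ (Fin d)), Integrable f →
        ∀ i : Fin d, (∫ y, f y) i = ∫ y, f y i := fun f hf i => by
      simpa using ((EuclideanSpace.proj (𝕜 := ℝ) i).integral_comp_comm hf).symm
    ext i
    rw [PiLp.smul_apply, pl _ hint2 i, pl _ hintlogp i, smul_eq_mul]
    set e : EuclideanSpace ℝ (Fin d) := EuclideanSpace.single i 1 with he
    have hgl : ∀ y, gradient (fun z => Real.log (p z)) y i = (p y)⁻¹ * fderiv ℝ p y e := by
      intro y
      rw [grad_apply, fderiv.log (hp_diff y) (hp_pos y).ne', ContinuousLinearMap.smul_apply,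
        smul_eq_mul]
    -- the Gaussian kernel function
    set K : EuclideanSpace ℝ (Fin d) → ℝ :=
      fun y => Real.exp (-‖x - y‖ ^ 2 / (2 * τ ^ 2)) with hK
    have hkx : ∀ y, k x y = K y := fun y => hk x y
    have hKdiff : Differentiable ℝ K := fun y =>
      (gaussian_hasFDerivAt τ hτ x y).differentiableAt
    have hKfd : ∀ y, fderiv ℝ K y e = K y * ((τ ^ 2)⁻¹ * (x i - y i)) := by
      intro y
      rw [hK]
      rw [gaussian_fderiv_apply τ hτ x y e]
      congr 2
      rw [he, EuclideanSpace.inner_single_right]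
      simp [PiLp.sub_apply]
    -- integrability hypotheses for integration by parts
    have h3 : Integrable (fun y => p y * K y) := by
      exact hintk.congr (Eventually.of_forall fun y => by simp only [hkx])
    have h1 : Integrable (fun y => fderiv ℝ p y e * K y) := by
      have h := ((EuclideanSpace.proj (𝕜 := ℝ) i).integrable_comp hintlogp).smul Zk
      refine h.congr (Eventually.of_forall fun y => ?_)
      simp only [PiLp.proj_apply, Pi.smul_apply, PiLp.smul_apply, smul_eq_mul]
      rw [hgl y, hkx y]
      field_simp [hZkne, (hp_pos y).ne']
    have h2 : Integrable (fun y => p y * fderiv ℝ K y e) := by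
      have h := ((EuclideanSpace.proj (𝕜 := ℝ) i).integrable_comp hint2).smul
        (-(Zk * (τ ^ 2)⁻¹))
      refine h.congr (Eventually.of_forall fun y => ?_)
      simp only [PiLp.proj_apply, Pi.smul_apply, PiLp.smul_apply, PiLp.sub_apply, smul_eq_mul]
      rw [hKfd y, hkx y]
      field_simp [hZkne, (hp_pos y).ne']
      ring
    have ibp := integral_mul_fderiv_eq_neg_fderiv_mul_of_integrable h1 h2 h3 (fun y _ => hp_diff y) (fun y _ => hKdiff y)
    -- ibp : ∫ y, p y * fderiv ℝ K y e = - ∫ y, fderiv ℝ p y e * K y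
    have lhs_eq : (∫ y, ((p y * k x y / Zk) • ((y : EuclideanSpace ℝ (Fin d)) - x)) i)
        = (-(Zk⁻¹ * τ ^ 2)) * ∫ y, p y * fderiv ℝ K y e := by
      rw [← integral_const_mul]
      congr 1
      funext y
      rw [hKfd y]
      simp only [PiLp.smul_apply, PiLp.sub_apply, smul_eq_mul]
      rw [hkx y]
      field_simp [hZkne, (hp_pos y).ne']
      ring
    have rhs_eq : (∫ y, ((p y * k x y / Zk) •
          gradient (fun z => Real.log (p z)) y) i)
        = Zk⁻¹ * ∫ y, fderiv ℝ p y e * K y := by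
      rw [← integral_const_mul]
      congr 1
      funext y
      simp only [PiLp.smul_apply, smul_eq_mul]
      rw [hgl y, hkx y]
      field_simp [hZkne, (hp_pos y).ne']
    rw [lhs_eq, rhs_eq, ibp]
    ring
  -- final assembly
  have split1 : (∫ y, (p y * k x y / Zk) • ((1 - ω) • (y - x) + (ω * τ ^ 2 / kBT) • F y))
      = (1 - ω) • (∫ y, (p y * k x y / Zk) • (y - x)) +
        (ω * τ ^ 2 / kBT) • ∫ y, (p y * k x y / Zk) • F y := by
    have hadd := integral_add
      (show Integrable (fun y => (1 - ω) • ((p y * k x y / Zk) • (y - x))) from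
        hint2.smul (1 - ω))
      (show Integrable (fun y => (ω * τ ^ 2 / kBT) • ((p y * k x y / Zk) • F y)) from
        hintF.smul (ω * τ ^ 2 / kBT))
    rw [integral_smul, integral_smul] at hadd
    rw [← hadd]
    congr 1
    funext y
    module
  have split2 : (∫ y, (p y * k x y / Zk) • gradient (fun z => Real.log (pB z / p z)) y)
      = (kBT)⁻¹ • (∫ y, (p y * k x y / Zk) • F y) -
        ∫ y, (p y * k x y / Zk) • gradient (fun z => Real.log (p z)) y := by
    have hsub := integral_sub
      (show Integrable (fun y => (kBT)⁻¹ • ((p y * k x y / Zk) • F y)) from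
        hintF.smul (kBT)⁻¹) hintlogp
    rw [integral_smul] at hsub
    rw [← hsub]
    congr 1
    funext y
    rw [hgradsplit y]
    module
  rw [split1, split2, key]
  match_scalars <;> ring
end

section
/- (Exact equilibrium of the force-substituted field at the Boltzmann distribution) Suppose both positive and negative samples are drawn from the Boltzmann density p_B. Then the force-substituted drifting field vanishes: V̂(x) := τ² E_{p_B}[k̄(x,Y) F(Y)/(k_B T)] - E_{p_B}[k̄(x,Y)(Y-x)] = 0 for all x, where k̄ is the normalized Gaussian kernel weight under p_B. -/
open MeasureTheory Filter RealInnerProductSpace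

/-- Exact equilibrium of the force-substituted drifting field at the Boltzmann
distribution: when both positive and negative samples come from `p_B`, the
field `V̂(x) = τ² E[k̄ F/(k_B T)] - E[k̄ (Y - x)]` vanishes for all `x`. -/
theorem stmt8 (d : ℕ) (τ kBT Z : ℝ) (hτ : 0 < τ) (hkBT : 0 < kBT) (hZ : 0 < Z)
    (k : EuclideanSpace ℝ (Fin d) → EuclideanSpace ℝ (Fin d) → ℝ)
    (hk : ∀ x y, k x y = Real.exp (-‖x - y‖ ^ 2 / (2 * τ ^ 2)))
    (E : EuclideanSpace ℝ (Fin d) → ℝ) (hE : ContDiff ℝ (⊤ : ℕ∞) E)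
    (F : EuclideanSpace ℝ (Fin d) → EuclideanSpace ℝ (Fin d))
    (hF : ∀ y, F y = -gradient E y)
    (pB : EuclideanSpace ℝ (Fin d) → ℝ)
    (hpB : ∀ y, pB y = Real.exp (-E y / kBT) / Z)
    (hZdef : Z = ∫ y, Real.exp (-E y / kBT))
    (hdecay : ∀ x, Tendsto (fun y => pB y * k x y) (cocompact _) (nhds 0))
    (hint1 : ∀ x, Integrable (fun y => pB y * k x y))
    (hint2 : ∀ x, Integrable (fun y => (pB y * k x y) • F y))
    (hint3 : ∀ x, Integrable (fun y => (pB y * k x y) • (y - x)))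
    (hZk : ∀ x, 0 < ∫ y, pB y * k x y) :
    ∀ x, (τ ^ 2) • ((∫ y, pB y * k x y)⁻¹ •
        ∫ y, (pB y * k x y) • ((kBT)⁻¹ • F y)) -
      (∫ y, pB y * k x y)⁻¹ • (∫ y, (pB y * k x y) • (y - x)) = 0 := by
  intro x
  have hτ2 : (τ : ℝ) ^ 2 ≠ 0 := pow_ne_zero 2 hτ.ne'
  have hEdiff : Differentiable ℝ E := hE.differentiable (by simp)
  set G : EuclideanSpace ℝ (Fin d) → ℝ := fun y => pB y * k x y with hGdef
  set S : EuclideanSpace ℝ (Fin d) → EuclideanSpace ℝ (Fin d) :=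
    fun y => kBT⁻¹ • F y - (τ ^ 2)⁻¹ • (y - x) with hSdef
  -- explicit form of G
  set ψ : EuclideanSpace ℝ (Fin d) → ℝ :=
    fun y => kBT⁻¹ * (-E y) + (2 * τ ^ 2)⁻¹ * (-‖x - y‖ ^ 2) with hψdef
  have hGeq : G = fun y => Z⁻¹ * Real.exp (ψ y) := by
    funext y
    have h1 : -E y / kBT = kBT⁻¹ * (-E y) := by ring
    have h2 : -‖x - y‖ ^ 2 / (2 * τ ^ 2) = (2 * τ ^ 2)⁻¹ * (-‖x - y‖ ^ 2) := by ring
    simp only [hGdef, hpB, hk, hψdef, h1, h2, Real.exp_add]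
    ring
  -- derivative of G
  have hGderiv : ∀ y, HasFDerivAt G (G y • (innerSL ℝ (S y))) y := by
    intro y
    have hE' : HasFDerivAt E ((InnerProductSpace.toDual ℝ _) (gradient E y)) y :=
      (hEdiff y).hasGradientAt.hasFDerivAt
    have hn : HasFDerivAt (fun y : EuclideanSpace ℝ (Fin d) => ‖x - y‖ ^ 2)
        (2 • (innerSL ℝ (x - y)).comp (-(ContinuousLinearMap.id ℝ _))) y :=
      ((hasFDerivAt_id y).const_sub x).norm_sq
    have hψ' : HasFDerivAt ψ
        ((kBT⁻¹ • -((InnerProductSpace.toDual ℝ _) (gradient E y))) +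
          ((2 * τ ^ 2)⁻¹ • -(2 • (innerSL ℝ (x - y)).comp
            (-(ContinuousLinearMap.id ℝ _))))) y :=
      (hE'.neg.const_mul kBT⁻¹).add (hn.neg.const_mul ((2 * τ ^ 2)⁻¹))
    have hG0 : HasFDerivAt (fun y => Z⁻¹ * Real.exp (ψ y))
        (Z⁻¹ • (Real.exp (ψ y) • _)) y := hψ'.exp.const_mul Z⁻¹
    rw [hGeq]
    refine hG0.congr_fderiv ?_
    symm
    ext v
    have hFy : F y = -gradient E y := hF y
    simp only [ContinuousLinearMap.smul_apply, innerSL_apply_apply, ContinuousLinearMap.add_apply,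
      ContinuousLinearMap.neg_apply, ContinuousLinearMap.comp_apply,
      ContinuousLinearMap.smul_apply, ContinuousLinearMap.id_apply,
      InnerProductSpace.toDual_apply_apply, hSdef, hFy, inner_sub_left, inner_smul_left,
      inner_neg_left, inner_neg_right, smul_eq_mul, RCLike.star_def, starRingEnd_apply,
      star_trivial, hGeq, ContinuousLinearMap.coe_smul', Pi.smul_apply, nsmul_eq_smul,
      inner_sub_right, nsmul_eq_mul]
    field_simp
    ring
  have hGdiff : Differentiable ℝ G := fun y => (hGderiv y).differentiableAt
  -- integrability of G • S
  have h1 : Integrable (fun y => G y • S y) := by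
    have := (Integrable.smul kBT⁻¹ (hint2 x)).sub (Integrable.smul ((τ : ℝ) ^ 2)⁻¹ (hint3 x))
    refine this.congr (Filter.Eventually.of_forall fun y => ?_)
    simp only [Pi.sub_apply, Pi.smul_apply, hSdef, hGdef, smul_sub]
    module
  -- key vanishing of directional integrals
  have key : ∀ v : EuclideanSpace ℝ (Fin d), ⟪v, ∫ y, G y • S y⟫ = 0 := by
    intro v
    rw [← integral_inner h1 v]
    have hfd : (fun y => ⟪v, G y • S y⟫) = fun y => 1 * fderiv ℝ G y v := by
      funext y
      rw [(hGderiv y).fderiv]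
      simp only [one_mul, ContinuousLinearMap.smul_apply, innerSL_apply_apply, smul_eq_mul]
      rw [real_inner_smul_right, real_inner_comm]
    have hIBP := integral_mul_fderiv_eq_neg_fderiv_mul_of_integrable
      (μ := (volume : Measure (EuclideanSpace ℝ (Fin d))))
      (f := fun _ : EuclideanSpace ℝ (Fin d) => (1 : ℝ)) (g := G) (v := v)
      ?_ ?_ ?_ (fun y _ => (differentiable_const (1 : ℝ)) y) (fun y _ => hGdiff y)
    · rw [hfd, hIBP]; simp
    · simpa using (integrable_zero _ ℝ (volume : Measure (EuclideanSpace ℝ (Fin d))))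
    · refine (((innerSL ℝ) v).integrable_comp h1).congr
        (Filter.Eventually.of_forall fun y => ?_)
      have := congrFun hfd y
      simpa only [innerSL_apply_apply, one_mul] using this
    · simpa using hint1 x
  have hI : (∫ y, G y • S y) = 0 := by
    have := key (∫ y, G y • S y)
    rwa [inner_self_eq_zero] at this
  -- split the integral
  have hint2' : Integrable (fun y => G y • (kBT⁻¹ • F y)) := by
    refine (Integrable.smul kBT⁻¹ (hint2 x)).congr (Filter.Eventually.of_forall fun y => ?_)
    simp only [Pi.smul_apply, hGdef]
    exact smul_comm _ _ _
  have hint3' : Integrable (fun y => G y • ((τ ^ 2 : ℝ)⁻¹ • (y - x))) := by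
    refine (Integrable.smul ((τ : ℝ) ^ 2)⁻¹ (hint3 x)).congr
      (Filter.Eventually.of_forall fun y => ?_)
    simp only [Pi.smul_apply, hGdef]
    exact smul_comm _ _ _
  have hsplit : (∫ y, G y • (kBT⁻¹ • F y)) = (τ ^ 2 : ℝ)⁻¹ • (∫ y, G y • (y - x)) := by
    have h2 : (∫ y, G y • S y)
        = (∫ y, G y • (kBT⁻¹ • F y)) - ∫ y, G y • ((τ ^ 2 : ℝ)⁻¹ • (y - x)) := by
      rw [← integral_sub hint2' hint3']
      congr 1; funext y
      simp only [hSdef, smul_sub]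
    rw [hI] at h2
    have h3 : (∫ y, G y • ((τ ^ 2 : ℝ)⁻¹ • (y - x)))
        = (τ ^ 2 : ℝ)⁻¹ • ∫ y, G y • (y - x) := by
      rw [show (fun y => G y • ((τ ^ 2 : ℝ)⁻¹ • (y - x)))
          = fun y => (τ ^ 2 : ℝ)⁻¹ • (G y • (y - x)) from funext fun y => smul_comm _ _ _,
        integral_smul]
    rw [h3] at h2
    exact sub_eq_zero.mp h2.symm
  show (τ ^ 2) • ((∫ y, G y)⁻¹ • ∫ y, G y • (kBT⁻¹ • F y)) -
      (∫ y, G y)⁻¹ • (∫ y, G y • (y - x)) = 0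
  rw [hsplit, smul_smul, smul_smul]
  have hc : τ ^ 2 * (∫ y, G y)⁻¹ * (τ ^ 2)⁻¹ = (∫ y, G y)⁻¹ := by
    rw [mul_comm (τ ^ 2), mul_assoc, mul_inv_cancel₀ hτ2, mul_one]
  rw [hc, sub_self]
end
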